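/- The half-t horseshoe marginal density p_ν(β) with ν < ∞ has heavier tails than the half-normal mixture limit: for fixed scale φ, there exists C > 0 such that p_ν(β) ≥ C β^{-(ν+1)} for all β ≥ 1, whereas the marginal with λ replaced by a fixed constant decays like exp(−cβ²). -/

import Mathlib

open Real MeasureTheory Filter Set

/-- Half-t density with `ν` degrees of freedom and scale `φ` on `(0,∞)`. -/
noncomputable def halfTPdf (ν φ l : ℝ) : ℝ :=
  (2 / φ) * (Real.Gamma ((ν + 1) / 2) / (Real.Gamma (ν / 2) * Real.sqrt (ν * Real.pi))) *
    (1 + l ^ 2 / (ν * φ ^ 2)) ^ (-(ν + 1) / 2)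

/-- Half-normal(0, λ²) density of the coefficient given the scale `l`. -/
noncomputable def halfNormalPdf (l β : ℝ) : ℝ :=
  (2 / Real.sqrt (2 * Real.pi * l ^ 2)) * Real.exp (-β ^ 2 / (2 * l ^ 2))

/-- Marginal density of the half-t horseshoe prior. -/
noncomputable def hthsMarginal (ν φ β : ℝ) : ℝ :=
  ∫ l in Ioi (0 : ℝ), halfNormalPdf l β * halfTPdf ν φ l

/-- The constant factor in the half-t density. -/
noncomputable def hthsK (ν φ : ℝ) : ℝ :=
  (2 / φ) * (Real.Gamma ((ν + 1) / 2) / (Real.Gamma (ν / 2) * Real.sqrt (ν * Real.pi)))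

lemma hthsK_pos {ν φ : ℝ} (hν : 1 ≤ ν) (hφ : 0 < φ) : 0 < hthsK ν φ := by
  have h1 : 0 < Real.Gamma ((ν + 1) / 2) := Real.Gamma_pos_of_pos (by linarith)
  have h2 : 0 < Real.Gamma (ν / 2) := Real.Gamma_pos_of_pos (by linarith)
  have h3 : 0 < Real.sqrt (ν * Real.pi) := Real.sqrt_pos.2 (by positivity)
  unfold hthsK; positivity

lemma halfT_eq (ν φ l : ℝ) :
    halfTPdf ν φ l = hthsK ν φ * (1 + l ^ 2 / (ν * φ ^ 2)) ^ (-(ν + 1) / 2) := rfl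

lemma base_pos {ν φ : ℝ} (hν : 1 ≤ ν) (hφ : 0 < φ) (l : ℝ) :
    0 < 1 + l ^ 2 / (ν * φ ^ 2) := by
  have : (0:ℝ) ≤ l ^ 2 / (ν * φ ^ 2) := by positivity
  linarith

lemma halfT_nonneg {ν φ : ℝ} (hν : 1 ≤ ν) (hφ : 0 < φ) (l : ℝ) : 0 ≤ halfTPdf ν φ l := by
  rw [halfT_eq]
  exact mul_nonneg (hthsK_pos hν hφ).le (Real.rpow_nonneg (base_pos hν hφ l).le _)

lemma halfT_le_K {ν φ : ℝ} (hν : 1 ≤ ν) (hφ : 0 < φ) (l : ℝ) :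
    halfTPdf ν φ l ≤ hthsK ν φ := by
  rw [halfT_eq]
  nth_rewrite 2 [show hthsK ν φ = hthsK ν φ * 1 by ring]
  refine mul_le_mul_of_nonneg_left ?_ (hthsK_pos hν hφ).le
  refine Real.rpow_le_one_of_one_le_of_nonpos ?_ (by linarith)
  have : (0:ℝ) ≤ l ^ 2 / (ν * φ ^ 2) := by positivity
  linarith

lemma halfNormal_nonneg (l β : ℝ) : 0 ≤ halfNormalPdf l β := by
  unfold halfNormalPdf; positivity

lemma sqrt_two_pi_sq {l : ℝ} (hl : 0 < l) :
    Real.sqrt (2 * Real.pi * l ^ 2) = Real.sqrt (2 * Real.pi) * l := by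
  rw [Real.sqrt_mul (by positivity), Real.sqrt_sq hl.le]

lemma exp_neg_le_inv {x : ℝ} (hx : 0 < x) : Real.exp (-x) ≤ 1 / x := by
  rw [Real.exp_neg, inv_eq_one_div]
  exact one_div_le_one_div_of_le hx (by linarith [Real.add_one_le_exp x])

/-- Bound on (0,1]. -/
lemma halfNormal_le_small {l β : ℝ} (hβ : 1 ≤ β) (hl : l ∈ Ioc (0:ℝ) 1) :
    halfNormalPdf l β ≤ 4 / Real.sqrt (2 * Real.pi) := by
  obtain ⟨hl0, hl1⟩ := hl
  have hs : 0 < Real.sqrt (2 * Real.pi) := by positivity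
  have h1 : Real.exp (-β ^ 2 / (2 * l ^ 2)) ≤ 2 * l ^ 2 := by
    have h2 : -β ^ 2 / (2 * l ^ 2) ≤ -(1 / (2 * l ^ 2)) := by
      rw [neg_div, neg_le_neg_iff]
      apply div_le_div_of_nonneg_right ?_ (by positivity)
      nlinarith
    calc Real.exp (-β ^ 2 / (2 * l ^ 2)) ≤ Real.exp (-(1 / (2 * l ^ 2))) :=
          Real.exp_le_exp.2 h2
      _ ≤ 1 / (1 / (2 * l ^ 2)) := exp_neg_le_inv (by positivity)
      _ = 2 * l ^ 2 := one_div_one_div _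
  unfold halfNormalPdf
  rw [sqrt_two_pi_sq hl0]
  calc 2 / (Real.sqrt (2 * Real.pi) * l) * Real.exp (-β ^ 2 / (2 * l ^ 2))
      ≤ 2 / (Real.sqrt (2 * Real.pi) * l) * (2 * l ^ 2) := by
        exact mul_le_mul_of_nonneg_left h1 (by positivity)
    _ = 4 * l / Real.sqrt (2 * Real.pi) := by field_simp; ring
    _ ≤ 4 / Real.sqrt (2 * Real.pi) := by
        apply div_le_div_of_nonneg_right ?_ hs.le
        linarith
  -- done

/-- Bound on [1,∞). -/
lemma halfT_le_large {ν φ : ℝ} (hν : 1 ≤ ν) (hφ : 0 < φ) {l : ℝ} (hl : 1 ≤ l) :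
    halfTPdf ν φ l ≤ hthsK ν φ * (ν * φ ^ 2) ^ ((ν + 1) / 2) * l ^ (-2 : ℝ) := by
  have hl0 : 0 < l := lt_of_lt_of_le one_pos hl
  have hq : 0 < ν * φ ^ 2 := by positivity
  have hM : 0 ≤ (ν * φ ^ 2) ^ ((ν + 1) / 2) := Real.rpow_nonneg hq.le _
  have h1 : (1 + l ^ 2 / (ν * φ ^ 2)) ^ (-(ν + 1) / 2)
      ≤ (l ^ 2 / (ν * φ ^ 2)) ^ (-(ν + 1) / 2) := by
    apply Real.rpow_le_rpow_of_nonpos (by positivity) (by linarith) (by linarith)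
  have h2 : (l ^ 2 / (ν * φ ^ 2)) ^ (-(ν + 1) / 2)
      = l ^ (-(ν + 1)) * (ν * φ ^ 2) ^ ((ν + 1) / 2) := by
    rw [Real.div_rpow (by positivity) hq.le, div_eq_mul_inv, ← Real.rpow_neg hq.le]
    congr 1
    · rw [← Real.rpow_natCast l 2, ← Real.rpow_mul hl0.le]
      congr 1
      push_cast; ring
    · ring_nf
  have h3 : l ^ (-(ν + 1)) ≤ l ^ (-2 : ℝ) :=
    Real.rpow_le_rpow_of_exponent_le hl (by linarith)
  rw [halfT_eq]
  calc hthsK ν φ * (1 + l ^ 2 / (ν * φ ^ 2)) ^ (-(ν + 1) / 2)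
      ≤ hthsK ν φ * (l ^ (-(ν + 1)) * (ν * φ ^ 2) ^ ((ν + 1) / 2)) := by
        rw [← h2]; exact mul_le_mul_of_nonneg_left h1 (hthsK_pos hν hφ).le
    _ ≤ hthsK ν φ * (l ^ (-2 : ℝ) * (ν * φ ^ 2) ^ ((ν + 1) / 2)) := by
        exact mul_le_mul_of_nonneg_left (mul_le_mul_of_nonneg_right h3 hM)
          (hthsK_pos hν hφ).le
    _ = hthsK ν φ * (ν * φ ^ 2) ^ ((ν + 1) / 2) * l ^ (-2 : ℝ) := by ring

lemma halfNormal_le_large {l β : ℝ} (hl : 1 ≤ l) :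
    halfNormalPdf l β ≤ 2 / Real.sqrt (2 * Real.pi) := by
  have hl0 : 0 < l := lt_of_lt_of_le one_pos hl
  have hs : 0 < Real.sqrt (2 * Real.pi) := by positivity
  unfold halfNormalPdf
  rw [sqrt_two_pi_sq hl0]
  calc 2 / (Real.sqrt (2 * Real.pi) * l) * Real.exp (-β ^ 2 / (2 * l ^ 2))
      ≤ 2 / (Real.sqrt (2 * Real.pi) * l) * 1 := by
        refine mul_le_mul_of_nonneg_left ?_ (by positivity)
        rw [Real.exp_le_one_iff]
        exact div_nonpos_of_nonpos_of_nonneg (neg_nonpos.2 (by positivity)) (by positivity)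
    _ = 2 / (Real.sqrt (2 * Real.pi) * l) := mul_one _
    _ ≤ 2 / (Real.sqrt (2 * Real.pi) * 1) := by
        apply div_le_div_of_nonneg_left (by norm_num) (by positivity)
        nlinarith
    _ = 2 / Real.sqrt (2 * Real.pi) := by rw [mul_one]

lemma hths_cont {ν φ β : ℝ} (hν : 1 ≤ ν) (hφ : 0 < φ) :
    ContinuousOn (fun l => halfNormalPdf l β * halfTPdf ν φ l) (Ioi (0:ℝ)) := by
  apply ContinuousOn.mul
  · unfold halfNormalPdf
    apply ContinuousOn.mul
    · apply ContinuousOn.div continuousOn_const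
        ((continuous_const.mul (continuous_pow 2)).sqrt.continuousOn)
      intro l hl
      have hl0 : 0 < l := hl
      exact ne_of_gt (Real.sqrt_pos.2 (show (0:ℝ) < 2 * Real.pi * l ^ 2 by positivity))
    · apply Real.continuous_exp.comp_continuousOn
      apply ContinuousOn.div continuousOn_const
        ((continuous_const.mul (continuous_pow 2)).continuousOn)
      intro l hl
      have hl0 : 0 < l := hl
      exact ne_of_gt (show (0:ℝ) < 2 * l ^ 2 by positivity)
  · unfold halfTPdf
    apply ContinuousOn.mul continuousOn_const
    apply ContinuousOn.rpow_const
    · exact (continuousOn_const.add (((continuous_pow 2).div_const _).continuousOn))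
    · intro l _
      exact Or.inl (ne_of_gt (base_pos hν hφ l))

lemma hths_integrable {ν φ β : ℝ} (hν : 1 ≤ ν) (hφ : 0 < φ) (hβ : 1 ≤ β) :
    IntegrableOn (fun l => halfNormalPdf l β * halfTPdf ν φ l) (Ioi (0:ℝ)) := by
  have hK := hthsK_pos hν hφ
  have hnn : ∀ l : ℝ, 0 ≤ halfNormalPdf l β * halfTPdf ν φ l := fun l =>
    mul_nonneg (halfNormal_nonneg l β) (halfT_nonneg hν hφ l)
  have hcont := hths_cont (β := β) hν hφ
  have h1 : IntegrableOn (fun l => halfNormalPdf l β * halfTPdf ν φ l) (Ioc (0:ℝ) 1) := by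
    refine Integrable.mono' (g := fun _ => 4 / Real.sqrt (2 * Real.pi) * hthsK ν φ)
      (integrable_const _)
      ((hcont.mono Ioc_subset_Ioi_self).aestronglyMeasurable measurableSet_Ioc) ?_
    filter_upwards [ae_restrict_mem measurableSet_Ioc] with l hl
    rw [Real.norm_of_nonneg (hnn l)]
    exact mul_le_mul (halfNormal_le_small hβ hl) (halfT_le_K hν hφ l)
      (halfT_nonneg hν hφ l) (by positivity)
  have h2 : IntegrableOn (fun l => halfNormalPdf l β * halfTPdf ν φ l) (Ioi (1:ℝ)) := by
    refine Integrable.mono'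
      (g := fun l => (2 / Real.sqrt (2 * Real.pi) * (hthsK ν φ * (ν * φ ^ 2) ^ ((ν + 1) / 2)))
        * l ^ (-2 : ℝ))
      ((integrableOn_Ioi_rpow_of_lt (by norm_num) zero_lt_one).const_mul _)
      ((hcont.mono (Ioi_subset_Ioi zero_le_one)).aestronglyMeasurable measurableSet_Ioi) ?_
    filter_upwards [ae_restrict_mem measurableSet_Ioi] with l hl
    have hl1 : (1:ℝ) ≤ l := le_of_lt hl
    rw [Real.norm_of_nonneg (hnn l)]
    calc halfNormalPdf l β * halfTPdf ν φ l
        ≤ (2 / Real.sqrt (2 * Real.pi)) *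
            (hthsK ν φ * (ν * φ ^ 2) ^ ((ν + 1) / 2) * l ^ (-2 : ℝ)) := by
          refine mul_le_mul (halfNormal_le_large hl1) (halfT_le_large hν hφ hl1)
            (halfT_nonneg hν hφ l) (by positivity)
      _ = 2 / Real.sqrt (2 * Real.pi) * (hthsK ν φ * (ν * φ ^ 2) ^ ((ν + 1) / 2))
            * l ^ (-2 : ℝ) := by ring
  have := h1.union h2
  rwa [Ioc_union_Ioi_eq_Ioi zero_le_one] at this

theorem stmt3 (ν φ : ℝ) (hν : 1 ≤ ν) (hφ : 0 < φ) :
    (∃ C : ℝ, 0 < C ∧ ∀ β : ℝ, 1 ≤ β → C * β ^ (-(ν + 1)) ≤ hthsMarginal ν φ β) ∧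
    (∀ l0 : ℝ, 0 < l0 → ∃ c C' : ℝ, 0 < c ∧ 0 < C' ∧
      ∀ β : ℝ, 1 ≤ β → halfNormalPdf l0 β ≤ C' * Real.exp (-c * β ^ 2)) := by
  constructor
  · -- heavy tail lower bound
    have hK := hthsK_pos hν hφ
    have hq : 0 < ν * φ ^ 2 := by positivity
    set A2 : ℝ := (1 + 4 / (ν * φ ^ 2)) ^ (-(ν + 1) / 2) with hA2
    have hbase : (0:ℝ) < 1 + 4 / (ν * φ ^ 2) := by positivity
    have hA2pos : 0 < A2 := Real.rpow_pos_of_pos hbase _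
    have hs : 0 < Real.sqrt (2 * Real.pi) := by positivity
    refine ⟨Real.exp (-(1/2)) * hthsK ν φ * A2 / Real.sqrt (2 * Real.pi), by positivity, ?_⟩
    intro β hβ
    have hβ0 : 0 < β := lt_of_lt_of_le one_pos hβ
    -- pointwise lower bound on Icc β 2β
    have hlow : ∀ l ∈ Icc β (2 * β),
        Real.exp (-(1/2)) * hthsK ν φ * A2 / Real.sqrt (2 * Real.pi) * β ^ (-(ν + 1)) / β
          ≤ halfNormalPdf l β * halfTPdf ν φ l := by
      intro l hl
      obtain ⟨hl1, hl2⟩ := hl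
      have hl0 : 0 < l := lt_of_lt_of_le hβ0 hl1
      have hN : 1 / (Real.sqrt (2 * Real.pi) * β) * Real.exp (-(1/2)) ≤ halfNormalPdf l β := by
        unfold halfNormalPdf
        rw [sqrt_two_pi_sq hl0]
        refine mul_le_mul ?_ ?_ (Real.exp_nonneg _) (by positivity)
        · rw [div_le_div_iff₀ (by positivity) (by positivity)]
          nlinarith [hs]
        · rw [Real.exp_le_exp]
          rw [neg_div, neg_le_neg_iff]
          rw [div_le_div_iff₀ (by positivity) (by norm_num)]
          nlinarith
      have hT : hthsK ν φ * (A2 * β ^ (-(ν + 1))) ≤ halfTPdf ν φ l := by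
        rw [halfT_eq]
        refine mul_le_mul_of_nonneg_left ?_ hK.le
        have hb1 : 1 + l ^ 2 / (ν * φ ^ 2) ≤ (1 + 4 / (ν * φ ^ 2)) * β ^ 2 := by
          have h4 : l ^ 2 ≤ 4 * β ^ 2 := by nlinarith
          have h6 : l ^ 2 / (ν * φ ^ 2) ≤ 4 * β ^ 2 / (ν * φ ^ 2) :=
            div_le_div_of_nonneg_right h4 hq.le
          have h7 : (1 + 4 / (ν * φ ^ 2)) * β ^ 2
              = β ^ 2 + 4 * β ^ 2 / (ν * φ ^ 2) := by ring
          have hβsq : (1:ℝ) ≤ β ^ 2 := by nlinarith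
          linarith
        calc A2 * β ^ (-(ν + 1))
            = ((1 + 4 / (ν * φ ^ 2)) * β ^ 2) ^ (-(ν + 1) / 2) := by
              rw [Real.mul_rpow hbase.le (by positivity), hA2]
              congr 1
              rw [← Real.rpow_natCast β 2, ← Real.rpow_mul hβ0.le]
              congr 1
              push_cast; ring
          _ ≤ (1 + l ^ 2 / (ν * φ ^ 2)) ^ (-(ν + 1) / 2) :=
              Real.rpow_le_rpow_of_nonpos (base_pos hν hφ l) hb1 (by linarith)
      calc Real.exp (-(1/2)) * hthsK ν φ * A2 / Real.sqrt (2 * Real.pi) * β ^ (-(ν + 1)) / β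
          = (1 / (Real.sqrt (2 * Real.pi) * β) * Real.exp (-(1/2)))
              * (hthsK ν φ * (A2 * β ^ (-(ν + 1)))) := by
            field_simp
        _ ≤ halfNormalPdf l β * halfTPdf ν φ l :=
            mul_le_mul hN hT (by positivity) (halfNormal_nonneg l β)
    have hint := hths_integrable (β := β) hν hφ hβ
    have hsub : Icc β (2 * β) ⊆ Ioi (0:ℝ) := fun x hx => lt_of_lt_of_le hβ0 hx.1
    have hIcc : IntegrableOn (fun l => halfNormalPdf l β * halfTPdf ν φ l) (Icc β (2 * β)) :=
      hint.mono_set hsub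
    have hvol : (volume (Icc β (2 * β))).toReal = β := by
      rw [Real.volume_Icc, ENNReal.toReal_ofReal (by linarith)]
      ring
    have hge := setIntegral_ge_of_const_le (μ := volume) measurableSet_Icc
      (by rw [Real.volume_Icc]; exact ENNReal.ofReal_ne_top) hlow hIcc
    rw [measureReal_def, hvol] at hge
    have hmono : ∫ l in Icc β (2 * β), halfNormalPdf l β * halfTPdf ν φ l
        ≤ ∫ l in Ioi (0:ℝ), halfNormalPdf l β * halfTPdf ν φ l := by
      refine setIntegral_mono_set hint ?_ (HasSubset.Subset.eventuallyLE hsub)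
      filter_upwards with l
      exact mul_nonneg (halfNormal_nonneg l β) (halfT_nonneg hν hφ l)
    have key : Real.exp (-(1/2)) * hthsK ν φ * A2 / Real.sqrt (2 * Real.pi) * β ^ (-(ν + 1)) / β * β
        = Real.exp (-(1/2)) * hthsK ν φ * A2 / Real.sqrt (2 * Real.pi) * β ^ (-(ν + 1)) := by
      field_simp
    rw [smul_eq_mul, mul_comm, key] at hge
    unfold hthsMarginal
    exact hge.trans hmono
  · -- Gaussian tail of the fixed-scale density
    intro l0 hl0
    refine ⟨1 / (2 * l0 ^ 2), 2 / Real.sqrt (2 * Real.pi * l0 ^ 2), by positivity, ?_, ?_⟩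
    · have : 0 < Real.sqrt (2 * Real.pi * l0 ^ 2) := Real.sqrt_pos.2 (by positivity)
      positivity
    · intro β _
      unfold halfNormalPdf
      apply le_of_eq
      congr 1
      · congr 1
        ring
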